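/- arXiv:2108.07098 — 2 statements merged into one kernel-verified Lean document; each statement's English description precedes it below -/
import Mathlib

section
/- Let A and B be compact self-adjoint positive semi-definite operators on a Hilbert space, where A has distinct eigenvalues α_1 > α_2 > ⋯ with unit eigenvectors a_i, and B has unit eigenvectors b_i for its i-th largest eigenvalue, with signs chosen so that ‖b_i − a_i‖ ≤ ‖b_i + a_i‖. Then ‖b_i − a_i‖ ≤ 2√2 ‖A − B‖_op / min(α_{i−1} − α_i, α_i − α_{i+1}). -/
open scoped InnerProductSpace

section DavisKahanHelpers

variable {H : Type*} [NormedAddCommGroup H] [InnerProductSpace ℝ H] [CompleteSpace H]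


lemma dk_inner_eig (A : H →L[ℝ] H) (hAsa : IsSelfAdjoint A) (a : ℕ → H) (α : ℕ → ℝ)
    (heig : ∀ i, A (a i) = α i • a i) (j : ℕ) (x : H) :
    ⟪a j, A x⟫_ℝ = α j * ⟪a j, x⟫_ℝ := by
  have h := hAsa.isSymmetric (a j) x
  simp only [ContinuousLinearMap.coe_coe] at h
  rw [← h, heig, real_inner_smul_left]

lemma dk_quad (A : H →L[ℝ] H) (hAsa : IsSelfAdjoint A) (a : ℕ → H) (α : ℕ → ℝ)
    (ha : Orthonormal ℝ a)
    (haspan : (Submodule.span ℝ (Set.range a)).topologicalClosure = ⊤)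
    (heig : ∀ i, A (a i) = α i • a i) (x : H) :
    HasSum (fun j => α j * ⟪a j, x⟫_ℝ ^ 2) ⟪A x, x⟫_ℝ := by
  let e : HilbertBasis ℕ ℝ H := HilbertBasis.mk ha (le_of_eq haspan.symm)
  have hcoe : ⇑e = a := HilbertBasis.coe_mk _ _
  have h := e.hasSum_inner_mul_inner x (A x)
  rw [hcoe] at h
  have h2 : ∀ j, ⟪x, a j⟫_ℝ * ⟪a j, A x⟫_ℝ = α j * ⟪a j, x⟫_ℝ ^ 2 := by
    intro j
    rw [dk_inner_eig A hAsa a α heig, real_inner_comm x (a j)]; ring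
  rw [real_inner_comm x (A x)]
  simpa only [h2] using h

lemma dk_parseval (a : ℕ → H) (ha : Orthonormal ℝ a)
    (haspan : (Submodule.span ℝ (Set.range a)).topologicalClosure = ⊤) (x : H) :
    HasSum (fun j => ⟪a j, x⟫_ℝ ^ 2) (‖x‖ ^ 2) := by
  let e : HilbertBasis ℕ ℝ H := HilbertBasis.mk ha (le_of_eq haspan.symm)
  have hcoe : ⇑e = a := HilbertBasis.coe_mk _ _
  have h := e.hasSum_inner_mul_inner x x
  rw [hcoe, real_inner_self_eq_norm_sq] at h
  have h2 : ∀ j, ⟪x, a j⟫_ℝ * ⟪a j, x⟫_ℝ = ⟪a j, x⟫_ℝ ^ 2 := by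
    intro j; rw [real_inner_comm x (a j)]; ring
  simpa only [h2] using h


lemma dk_exists_unit (b : ℕ → H) (hb : Orthonormal ℝ b) (a : ℕ → H) (i : ℕ) :
    ∃ x : H, ‖x‖ = 1 ∧ (∀ j < i, ⟪a j, x⟫_ℝ = 0) ∧ (∀ j > i, ⟪b j, x⟫_ℝ = 0) := by
  classical
  set f : Fin (i + 1) → H := fun k => b k with hf
  have hli : LinearIndependent ℝ f :=
    hb.linearIndependent.comp (fun k : Fin (i+1) => (k : ℕ)) Fin.val_injective
  set V : Submodule ℝ H := Submodule.span ℝ (Set.range f) with hV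
  have : FiniteDimensional ℝ V := FiniteDimensional.span_of_finite ℝ (Set.finite_range f)
  have hdim : Module.finrank ℝ V = i + 1 := by
    rw [hV, finrank_span_eq_card hli, Fintype.card_fin]
  set L : V →ₗ[ℝ] (Fin i → ℝ) :=
    LinearMap.pi (fun j : Fin i => ((innerSL ℝ (a j)).toLinearMap.comp V.subtype)) with hL
  have hnotinj : ¬ Function.Injective L := by
    intro hinj
    have := LinearMap.finrank_le_finrank_of_injective hinj
    rw [hdim] at this
    simp [Module.finrank_pi] at this
  rw [Function.not_injective_iff] at hnotinj
  obtain ⟨u, v, huv, hne⟩ := hnotinj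
  set z := u - v with hz
  have hz0 : z ≠ 0 := sub_ne_zero.mpr hne
  have hLz : L z = 0 := by rw [hz, map_sub, huv, sub_self]
  have hzH : (z : H) ≠ 0 := fun h => hz0 (Subtype.ext h)
  have hnz : ‖(z : H)‖ ≠ 0 := norm_ne_zero_iff.mpr hzH
  refine ⟨‖(z : H)‖⁻¹ • (z : H), ?_, ?_, ?_⟩
  · rw [norm_smul, norm_inv, norm_norm, inv_mul_cancel₀ hnz]
  · intro j hj
    have := congrFun hLz ⟨j, hj⟩
    simp only [hL, LinearMap.pi_apply, LinearMap.comp_apply, Submodule.coe_subtype,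
      ContinuousLinearMap.coe_coe, innerSL_apply_apply, Pi.zero_apply] at this
    rw [inner_smul_right, this, mul_zero]
  · intro j hj
    rw [inner_smul_right]
    have hmem : (z : H) ∈ V := z.2
    have : ⟪b j, (z : H)⟫_ℝ = 0 := by
      refine Submodule.span_induction ?_ ?_ ?_ ?_ hmem
      · rintro _ ⟨k, rfl⟩
        exact hb.2 (by omega : j ≠ (k : ℕ))
      · exact inner_zero_right _
      · intro u v _ _ h1 h2; rw [inner_add_right, h1, h2, add_zero]
      · intro c u _ h1; rw [inner_smul_right, h1, mul_zero]
    rw [this, mul_zero]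


lemma dk_upper (A : H →L[ℝ] H) (hAsa : IsSelfAdjoint A) (a : ℕ → H) (α : ℕ → ℝ)
    (ha : Orthonormal ℝ a)
    (haspan : (Submodule.span ℝ (Set.range a)).topologicalClosure = ⊤)
    (heig : ∀ i, A (a i) = α i • a i) (hanti : Antitone α) (i : ℕ) (x : H)
    (hx : ∀ j < i, ⟪a j, x⟫_ℝ = 0) :
    ⟪A x, x⟫_ℝ ≤ α i * ‖x‖ ^ 2 := by
  refine hasSum_le ?_ (dk_quad A hAsa a α ha haspan heig x)
    ((dk_parseval a ha haspan x).mul_left (α i))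
  intro j
  rcases lt_or_ge j i with hj | hj
  · simp [hx j hj]
  · exact mul_le_mul_of_nonneg_right (hanti hj) (sq_nonneg _)

lemma dk_lower (B : H →L[ℝ] H) (hBsa : IsSelfAdjoint B) (b : ℕ → H) (β : ℕ → ℝ)
    (hb : Orthonormal ℝ b)
    (hbspan : (Submodule.span ℝ (Set.range b)).topologicalClosure = ⊤)
    (heig : ∀ i, B (b i) = β i • b i) (hanti : Antitone β) (i : ℕ) (x : H)
    (hx : ∀ j > i, ⟪b j, x⟫_ℝ = 0) :
    β i * ‖x‖ ^ 2 ≤ ⟪B x, x⟫_ℝ := by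
  refine hasSum_le ?_
    ((dk_parseval b hb hbspan x).mul_left (β i)) (dk_quad B hBsa b β hb hbspan heig x)
  intro j
  rcases le_or_gt j i with hj | hj
  · exact mul_le_mul_of_nonneg_right (hanti hj) (sq_nonneg _)
  · simp [hx j hj]

lemma dk_weyl (A B : H →L[ℝ] H) (hAsa : IsSelfAdjoint A) (hBsa : IsSelfAdjoint B)
    (a b : ℕ → H) (α β : ℕ → ℝ) (ha : Orthonormal ℝ a) (hb : Orthonormal ℝ b)
    (haspan : (Submodule.span ℝ (Set.range a)).topologicalClosure = ⊤)
    (hbspan : (Submodule.span ℝ (Set.range b)).topologicalClosure = ⊤)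
    (hα : Antitone α) (hβ : Antitone β)
    (heigA : ∀ i, A (a i) = α i • a i) (heigB : ∀ i, B (b i) = β i • b i)
    (i : ℕ) : β i - α i ≤ ‖B - A‖ := by
  obtain ⟨x, hx1, hxa, hxb⟩ := dk_exists_unit b hb a i
  have h1 : β i ≤ ⟪B x, x⟫_ℝ := by
    have := dk_lower B hBsa b β hb hbspan heigB hβ i x hxb
    rwa [hx1, one_pow, mul_one] at this
  have h2 : ⟪A x, x⟫_ℝ ≤ α i := by
    have := dk_upper A hAsa a α ha haspan heigA hα i x hxa
    rwa [hx1, one_pow, mul_one] at this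
  have h3 : ⟪B x, x⟫_ℝ - ⟪A x, x⟫_ℝ = ⟪(B - A) x, x⟫_ℝ := by
    simp [inner_sub_left]
  have h4 : ⟪(B - A) x, x⟫_ℝ ≤ ‖B - A‖ := by
    calc ⟪(B - A) x, x⟫_ℝ ≤ ‖(B - A) x‖ * ‖x‖ := real_inner_le_norm _ _
    _ ≤ ‖B - A‖ * ‖x‖ * ‖x‖ :=
        mul_le_mul_of_nonneg_right ((B - A).le_opNorm x) (norm_nonneg _)
    _ = ‖B - A‖ := by rw [hx1]; ring
  linarith

end DavisKahanHelpers

/-- Eigenvector perturbation bound: if `A`, `B` are compact self-adjoint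
positive semi-definite operators with complete orthonormal eigensystems
`(α_i, a_i)` (eigenvalues distinct, decreasing) and `(β_i, b_i)` (eigenvalues
decreasing), and the signs are chosen so that `‖b_i − a_i‖ ≤ ‖b_i + a_i‖`,
then `‖b_i − a_i‖ ≤ 2√2 ‖A − B‖_op / min(α_{i−1} − α_i, α_i − α_{i+1})`
(for the top eigenvector the minimum is taken as `α_0 − α_1`).
Here eigenvalues are indexed by `ℕ` starting at `0`. -/
theorem stmt_5 {H : Type*} [NormedAddCommGroup H] [InnerProductSpace ℝ H]
    [CompleteSpace H] (A B : H →L[ℝ] H)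
    (hAc : IsCompactOperator A) (hBc : IsCompactOperator B)
    (hAsa : IsSelfAdjoint A) (hBsa : IsSelfAdjoint B)
    (hApos : ∀ x : H, 0 ≤ ⟪A x, x⟫_ℝ) (hBpos : ∀ x : H, 0 ≤ ⟪B x, x⟫_ℝ)
    (a b : ℕ → H) (α β : ℕ → ℝ)
    (ha : Orthonormal ℝ a) (hb : Orthonormal ℝ b)
    (haspan : (Submodule.span ℝ (Set.range a)).topologicalClosure = ⊤)
    (hbspan : (Submodule.span ℝ (Set.range b)).topologicalClosure = ⊤)
    (hα : StrictAnti α) (hβ : Antitone β)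
    (heigA : ∀ i, A (a i) = α i • a i) (heigB : ∀ i, B (b i) = β i • b i)
    (i : ℕ)
    (hsign : ‖b i - a i‖ ≤ ‖b i + a i‖) :
    ‖b i - a i‖ ≤ 2 * Real.sqrt 2 * ‖A - B‖ /
      (if i = 0 then α 0 - α 1 else min (α (i - 1) - α i) (α i - α (i + 1))) := by
  have dk_weyl : ∀ j : ℕ, |α j - β j| ≤ ‖A - B‖ := by
    intro j
    rw [abs_sub_le_iff]
    constructor
    · exact dk_weyl B A hBsa hAsa b a β α hb ha hbspan haspan hβ hα.antitone heigB heigA j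
    · have := dk_weyl A B hAsa hBsa a b α β ha hb haspan hbspan hα.antitone hβ heigA heigB j
      rwa [norm_sub_rev] at this
  have dk_parseval : ∀ (x : H), HasSum (fun j => ⟪a j, x⟫_ℝ ^ 2) (‖x‖ ^ 2) :=
    dk_parseval a ha haspan
  have dk_inner_eig : ∀ (j : ℕ) (x : H), ⟪a j, A x⟫_ℝ = α j * ⟪a j, x⟫_ℝ :=
    dk_inner_eig A hAsa a α heigA
  classical
  set E := ‖A - B‖ with hE
  set δ := (if i = 0 then α 0 - α 1 else min (α (i - 1) - α i) (α i - α (i + 1))) with hδ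
  have hEnn : 0 ≤ E := norm_nonneg _
  have δpos : 0 < δ := by
    rw [hδ]
    split_ifs with h0
    · subst h0; have := hα (show (0:ℕ) < 1 by norm_num); linarith
    · refine lt_min ?_ ?_
      · have := hα (show i - 1 < i by omega); linarith
      · have := hα (show i < i + 1 by omega); linarith
  set c : ℕ → ℝ := fun j => ⟪a j, b i⟫_ℝ with hc
  have hna : ‖a i‖ = 1 := ha.1 i
  have hnb : ‖b i‖ = 1 := hb.1 i
  have hsq : ‖b i - a i‖ ^ 2 = 2 - 2 * c i := by
    rw [norm_sub_sq_real, hna, hnb, real_inner_comm (a i) (b i)]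
    simp [hc]; ring
  have hsq' : ‖b i + a i‖ ^ 2 = 2 + 2 * c i := by
    rw [norm_add_sq_real, hna, hnb, real_inner_comm (a i) (b i)]
    simp [hc]; ring
  have hci0 : 0 ≤ c i := by
    have h := mul_self_le_mul_self (norm_nonneg (b i - a i)) hsign
    rw [← pow_two, ← pow_two, hsq, hsq'] at h
    linarith
  have hci1 : c i ≤ 1 := by
    have := real_inner_le_norm (a i) (b i)
    rw [hna, hnb] at this; simpa [hc] using this
  rcases le_or_gt δ (2 * E) with hcase | hcase
  · -- trivial case: gap small relative to perturbation
    have h2 : ‖b i - a i‖ ^ 2 ≤ 2 := by rw [hsq]; linarith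
    have h3 : ‖b i - a i‖ ≤ Real.sqrt 2 := by
      rw [← Real.sqrt_sq (norm_nonneg (b i - a i))]
      exact Real.sqrt_le_sqrt h2
    refine h3.trans ?_
    rw [le_div_iff₀ δpos]
    nlinarith [Real.sqrt_nonneg 2, hcase]
  · -- main case
    have hgap : ∀ j, j ≠ i → δ ≤ |α j - α i| := by
      intro j hj
      rcases lt_or_gt_of_ne hj with hji | hji
      · have hi0 : i ≠ 0 := by omega
        have h1 : δ ≤ α (i - 1) - α i := by rw [hδ, if_neg hi0]; exact min_le_left _ _
        have h2 : α (i - 1) ≤ α j := hα.antitone (by omega : j ≤ i - 1)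
        rw [abs_of_pos (by have := hα hji; linarith)]
        linarith
      · have h1 : δ ≤ α i - α (i + 1) := by
          rw [hδ]; split_ifs with h0
          · subst h0; norm_num
          · exact min_le_right _ _
        have h2 : α j ≤ α (i + 1) := hα.antitone (by omega : i + 1 ≤ j)
        rw [abs_sub_comm, abs_of_pos (by have := hα hji; linarith)]
        linarith
    have hWi : |α i - β i| ≤ E := dk_weyl i
    have hgapβ : ∀ j, j ≠ i → δ / 2 ≤ |α j - β i| := by
      intro j hj
      have h1 := hgap j hj
      have h2 : |α j - α i| ≤ |α j - β i| + |α i - β i| := by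
        have := abs_sub_le (α j) (β i) (α i)
        rwa [abs_sub_comm (β i) (α i)] at this
      linarith
    set y := (A - B) (b i) with hy
    have hyc : ∀ j, ⟪a j, y⟫_ℝ = (α j - β i) * c j := by
      intro j
      rw [hy, ContinuousLinearMap.sub_apply, inner_sub_right, dk_inner_eig j (b i),
        heigB, inner_smul_right]
      ring
    have hysum : HasSum (fun j => ((α j - β i) * c j) ^ 2) (‖y‖ ^ 2) := by
      have := dk_parseval y
      simpa only [hyc] using this
    have hyE : ‖y‖ ≤ E := by
      calc ‖y‖ ≤ ‖A - B‖ * ‖b i‖ := (A - B).le_opNorm (b i)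
      _ = E := by rw [hnb, mul_one]
    have hcsum : HasSum (fun j => c j ^ 2) 1 := by
      have := dk_parseval (b i)
      rwa [hnb, one_pow] at this
    have hg : HasSum (fun j => if j = i then 0 else c j ^ 2) (1 - c i ^ 2) := by
      have h := hcsum.update i 0
      have he : Function.update (fun j => c j ^ 2) i 0 = fun j => if j = i then 0 else c j ^ 2 := by
        funext j; simp [Function.update_apply]
      rw [he] at h
      rw [show (1:ℝ) - c i ^ 2 = -c i ^ 2 + 1 by ring]
      simpa using h
    have key : (δ / 2) ^ 2 * (1 - c i ^ 2) ≤ E ^ 2 := by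
      have h1 := hg.mul_left ((δ / 2) ^ 2)
      have h2 : (δ / 2) ^ 2 * (1 - c i ^ 2) ≤ ‖y‖ ^ 2 := by
        refine hasSum_le ?_ h1 hysum
        intro j
        by_cases hj : j = i
        · simp [hj]; positivity
        · simp only [if_neg hj]
          rw [mul_pow]
          refine mul_le_mul_of_nonneg_right ?_ (sq_nonneg _)
          have h3 := hgapβ j hj
          calc (δ / 2) ^ 2 ≤ |α j - β i| ^ 2 := by
                refine pow_le_pow_left₀ (by positivity) h3 2
          _ = (α j - β i) ^ 2 := sq_abs _
      have h4 : ‖y‖ ^ 2 ≤ E ^ 2 := pow_le_pow_left₀ (norm_nonneg _) hyE 2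
      linarith
    have key' : δ ^ 2 * (1 - c i ^ 2) ≤ 4 * E ^ 2 := by nlinarith [key]
    have hfin : ‖b i - a i‖ ^ 2 ≤ 8 * E ^ 2 / δ ^ 2 := by
      rw [hsq, le_div_iff₀ (pow_pos δpos 2)]
      nlinarith [key', mul_nonneg (sq_nonneg δ) (show (0:ℝ) ≤ c i - c i ^ 2 by nlinarith)]
    have h8 : (2 * Real.sqrt 2 * E / δ) ^ 2 = 8 * E ^ 2 / δ ^ 2 := by
      rw [div_pow, mul_pow, mul_pow, Real.sq_sqrt (by norm_num : (0:ℝ) ≤ 2)]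
      norm_num
    have hRnn : 0 ≤ 2 * Real.sqrt 2 * E / δ := by positivity
    have := Real.sqrt_le_sqrt (hfin.trans_eq h8.symm)
    rwa [Real.sqrt_sq (norm_nonneg _), Real.sqrt_sq hRnn] at this
end

section
/- Suppose the eigenvalues of a compact positive operator Γ satisfy λ_k ≤ C k^{-σ} and λ_k − λ_{k+1} ≥ C^{-1} k^{-σ-1} for all k, for some σ > 0 and C > 0, and let β > 1 + 1/σ. Then sup over all pairs of distinct positive integers i ≠ q of λ_q^β / |λ_i − λ_q| is finite. -/
/-- If the eigenvalues of a compact positive operator satisfy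
`λ_k ≤ C k^{-σ}` and `λ_k − λ_{k+1} ≥ C⁻¹ k^{-σ-1}` for all `k ≥ 1`, with
`σ > 0`, `C > 0`, and `β > 1 + 1/σ`, then
`sup_{i ≠ q, i,q ≥ 1} λ_q^β / |λ_i − λ_q| < ∞`. -/
theorem stmt_16 (lam : ℕ → ℝ) (σ C β : ℝ) (hσ : 0 < σ) (hC : 0 < C)
    (hlampos : ∀ k, 1 ≤ k → 0 < lam k)
    (hanti : ∀ k l, 1 ≤ k → k ≤ l → lam l ≤ lam k)
    (hupper : ∀ k : ℕ, 1 ≤ k → lam k ≤ C * (k : ℝ) ^ (-σ))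
    (hgap : ∀ k : ℕ, 1 ≤ k → C⁻¹ * (k : ℝ) ^ (-σ - 1) ≤ lam k - lam (k + 1))
    (hβ : 1 + 1 / σ < β) :
    ∃ M : ℝ, ∀ i q : ℕ, 1 ≤ i → 1 ≤ q → i ≠ q →
      lam q ^ β / |lam i - lam q| ≤ M := by
  have hβ0 : 0 < β := lt_trans (by positivity) hβ
  refine ⟨C ^ (β + 1), ?_⟩
  intro i q hi hq hne
  set m := min i q with hm
  set n := max i q with hn
  have hm1 : 1 ≤ m := le_min hi hq
  have hmn : m + 1 ≤ n := by
    rcases lt_or_gt_of_ne hne with h | h <;> simp only [hm, hn] <;> omega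
  have hmpos : (0:ℝ) < (m:ℝ) := by exact_mod_cast hm1
  have hm1' : (1:ℝ) ≤ (m:ℝ) := by exact_mod_cast hm1
  have hlow : C⁻¹ * (m:ℝ) ^ (-σ - 1) ≤ lam m - lam n := by
    have h1 := hgap m hm1
    have h2 := hanti (m + 1) n (by omega) hmn
    linarith
  have hlowpos : (0:ℝ) < C⁻¹ * (m:ℝ) ^ (-σ - 1) := by positivity
  have habs : |lam i - lam q| = lam m - lam n := by
    rcases lt_or_gt_of_ne hne with h | h
    · rw [hm, hn, min_eq_left h.le, max_eq_right h.le,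
        abs_of_nonneg (by linarith [hanti i q hi h.le])]
    · rw [hm, hn, min_eq_right h.le, max_eq_left h.le,
        abs_of_nonpos (by linarith [hanti q i hq h.le]), neg_sub]
  have hqpos := hlampos q hq
  have hnum : lam q ^ β ≤ C ^ β * ((m:ℝ) ^ (-σ)) ^ β := by
    calc lam q ^ β ≤ (C * (m:ℝ) ^ (-σ)) ^ β :=
          Real.rpow_le_rpow hqpos.le
            (le_trans (hanti m q hm1 (min_le_right i q)) (hupper m hm1)) hβ0.le
      _ = C ^ β * ((m:ℝ) ^ (-σ)) ^ β := Real.mul_rpow hC.le (by positivity)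
  rw [habs, div_le_iff₀ (lt_of_lt_of_le hlowpos hlow)]
  have hexp : σ + 1 - σ * β ≤ 0 := by
    have h1 : σ * (1 + 1 / σ) < σ * β := by
      exact mul_lt_mul_of_pos_left hβ hσ
    have h2 : σ * (1 + 1 / σ) = σ + 1 := by field_simp
    linarith
  have hkey : C ^ β * ((m:ℝ) ^ (-σ)) ^ β
      = C ^ (β + 1) * (C⁻¹ * (m:ℝ) ^ (-σ - 1)) * (m:ℝ) ^ (σ + 1 - σ * β) := by
    have h1 : (m:ℝ) ^ (-σ - 1) * (m:ℝ) ^ (σ + 1 - σ * β) = (m:ℝ) ^ ((-σ) * β) := by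
      rw [← Real.rpow_add hmpos]; ring_nf
    rw [← Real.rpow_mul hmpos.le, Real.rpow_add hC, Real.rpow_one,
      show C ^ β * C * (C⁻¹ * (m:ℝ) ^ (-σ - 1)) * (m:ℝ) ^ (σ + 1 - σ * β)
        = C ^ β * (C * C⁻¹) * ((m:ℝ) ^ (-σ - 1) * (m:ℝ) ^ (σ + 1 - σ * β)) from by ring,
      h1, mul_inv_cancel₀ hC.ne', mul_one]
  calc lam q ^ β ≤ C ^ β * ((m:ℝ) ^ (-σ)) ^ β := hnum
    _ = C ^ (β + 1) * (C⁻¹ * (m:ℝ) ^ (-σ - 1)) * (m:ℝ) ^ (σ + 1 - σ * β) := hkey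
    _ ≤ C ^ (β + 1) * (C⁻¹ * (m:ℝ) ^ (-σ - 1)) * 1 := by
        apply mul_le_mul_of_nonneg_left
          (Real.rpow_le_one_of_one_le_of_nonpos hm1' hexp) (by positivity)
    _ = C ^ (β + 1) * (C⁻¹ * (m:ℝ) ^ (-σ - 1)) := by ring
    _ ≤ C ^ (β + 1) * (lam m - lam n) := by
        apply mul_le_mul_of_nonneg_left hlow (by positivity)
end
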